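/- arXiv:1402.4172 — 2 statements merged into one kernel-verified Lean document; each statement's English description precedes it below -/
import Mathlib

section
/- Rule II (left) with singleton ∨ preserves truth in both directions: suppose in the premise Φ{(A ∨_i C) ∨_k (B ∨_j C)} and conclusion Φ{(A ∨_k B) ∨_m C} the clusters i, j, m are singletons (i.e., i, j, m each occurs exactly once in its cirquent, and i, j, m, k are pairwise distinct IDs not occurring elsewhere), and the two copies of C in the premise use fresh distinct singleton IDs corresponding bijectively to the singleton IDs in the C of the conclusion. Then for any interpretation *, the premise is true under * if and only if the conclusion is true under *. -/
/-- Cirquents: NNF propositional formulas; literals are (atom, sign),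
    each ∨-occurrence carries a cluster ID (a natural number). -/
inductive Cirq : Type where
  | lit : ℕ → Bool → Cirq
  | and : Cirq → Cirq → Cirq
  | or  : ℕ → Cirq → Cirq → Cirq

/-- Metatruth w.r.t. an interpretation `I` and metaselection `f`
    (`f k = true` means `left`). -/
def metatrue (I : ℕ → Bool) (f : ℕ → Bool) : Cirq → Prop
  | .lit n s => I n = s
  | .and A B => metatrue I f A ∧ metatrue I f B
  | .or k A B => (f k = true ∧ metatrue I f A) ∨ (f k = false ∧ metatrue I f B)

/-- Classical truth of the underlying formula (cluster IDs erased). -/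
def ctrue (I : ℕ → Bool) : Cirq → Prop
  | .lit n s => I n = s
  | .and A B => ctrue I A ∧ ctrue I B
  | .or _ A B => ctrue I A ∨ ctrue I B

/-- Truth of a cirquent under an interpretation. -/
def cirqTrue (I : ℕ → Bool) (C : Cirq) : Prop := ∃ f : ℕ → Bool, metatrue I f C

def valid (C : Cirq) : Prop := ∀ I : ℕ → Bool, cirqTrue I C

/-- Number of ∨-occurrences in cluster `k`. -/
def cnt (k : ℕ) : Cirq → ℕ
  | .lit _ _ => 0
  | .and A B => cnt k A + cnt k B
  | .or m A B => (if m = k then 1 else 0) + cnt k A + cnt k B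

/-- Set of cluster IDs occurring in a cirquent. -/
def ids : Cirq → Set ℕ
  | .lit _ _ => ∅
  | .and A B => ids A ∪ ids B
  | .or k A B => insert k (ids A ∪ ids B)

/-- A cirquent is classical iff every cluster is a singleton. -/
def classicalCirq (C : Cirq) : Prop := ∀ k : ℕ, cnt k C ≤ 1

/-- Renaming of cluster IDs. -/
def rename (ρ : ℕ → ℕ) : Cirq → Cirq
  | .lit n s => .lit n s
  | .and A B => .and (rename ρ A) (rename ρ B)
  | .or k A B => .or (ρ k) (rename ρ A) (rename ρ B)

/-- One-hole cirquent contexts. -/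
inductive Ctx : Type where
  | hole : Ctx
  | andL : Ctx → Cirq → Ctx
  | andR : Cirq → Ctx → Ctx
  | orL : ℕ → Ctx → Cirq → Ctx
  | orR : ℕ → Cirq → Ctx → Ctx

/-- Plugging a cirquent into the hole of a context. -/
def Ctx.plug : Ctx → Cirq → Cirq
  | .hole, X => X
  | .andL Φ C, X => .and (Φ.plug X) C
  | .andR C Φ, X => .and C (Φ.plug X)
  | .orL k Φ C, X => .or k (Φ.plug X) C
  | .orR k C Φ, X => .or k C (Φ.plug X)

/-- The inference rules of IF_p, as a one-step relation premise ↦ conclusion. -/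
inductive Step : Cirq → Cirq → Prop where
  | ruleIL (Φ Ψ : Ctx) (A B C : Cirq) (k : ℕ) :
      Step (Φ.plug (.or k (Ψ.plug A) C)) (Φ.plug (.or k (Ψ.plug (.or k A B)) C))
  | ruleIR (Φ Ψ : Ctx) (A B C : Cirq) (k : ℕ) :
      Step (Φ.plug (.or k C (Ψ.plug A))) (Φ.plug (.or k C (Ψ.plug (.or k B A))))
  | ruleIIL_and (Φ : Ctx) (A B C : Cirq) (k : ℕ) :
      Step (Φ.plug (.or k (.and A C) (.and B C))) (Φ.plug (.and (.or k A B) C))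
  | ruleIIR_and (Φ : Ctx) (A B C : Cirq) (k : ℕ) :
      Step (Φ.plug (.or k (.and C A) (.and C B))) (Φ.plug (.and C (.or k A B)))
  | ruleIIL_orN (Φ : Ctx) (A B C : Cirq) (k l : ℕ)
      (hns : 2 ≤ cnt l (Φ.plug (.or l (.or k A B) C))) :
      Step (Φ.plug (.or k (.or l A C) (.or l B C))) (Φ.plug (.or l (.or k A B) C))
  | ruleIIR_orN (Φ : Ctx) (A B C : Cirq) (k l : ℕ)
      (hns : 2 ≤ cnt l (Φ.plug (.or l C (.or k A B)))) :
      Step (Φ.plug (.or k (.or l C A) (.or l C B))) (Φ.plug (.or l C (.or k A B)))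
  | ruleIIL_orS (Φ : Ctx) (A B C : Cirq) (ρ₁ ρ₂ : ℕ → ℕ) (k i j m : ℕ)
      (hij : i ≠ j) (hik : i ≠ k) (hjk : j ≠ k) (him : i ≠ m) (hjm : j ≠ m) (hkm : k ≠ m)
      (hi : cnt i (Φ.plug (.or k (.or i A (rename ρ₁ C)) (.or j B (rename ρ₂ C)))) = 1)
      (hj : cnt j (Φ.plug (.or k (.or i A (rename ρ₁ C)) (.or j B (rename ρ₂ C)))) = 1)
      (hm : cnt m (Φ.plug (.or m (.or k A B) C)) = 1)
      (hfix : ∀ x ∈ ids C, cnt x (Φ.plug (.or m (.or k A B) C)) ≠ 1 → ρ₁ x = x ∧ ρ₂ x = x)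
      (hfresh : ∀ x ∈ ids C, cnt x (Φ.plug (.or m (.or k A B) C)) = 1 →
        cnt (ρ₁ x) (Φ.plug (.or k (.or i A (rename ρ₁ C)) (.or j B (rename ρ₂ C)))) = 1 ∧
        cnt (ρ₂ x) (Φ.plug (.or k (.or i A (rename ρ₁ C)) (.or j B (rename ρ₂ C)))) = 1 ∧
        ρ₁ x ≠ ρ₂ x)
      (hinj₁ : Set.InjOn ρ₁ (ids C)) (hinj₂ : Set.InjOn ρ₂ (ids C)) :
      Step (Φ.plug (.or k (.or i A (rename ρ₁ C)) (.or j B (rename ρ₂ C))))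
           (Φ.plug (.or m (.or k A B) C))
  | ruleIIR_orS (Φ : Ctx) (A B C : Cirq) (ρ₁ ρ₂ : ℕ → ℕ) (k i j m : ℕ)
      (hij : i ≠ j) (hik : i ≠ k) (hjk : j ≠ k) (him : i ≠ m) (hjm : j ≠ m) (hkm : k ≠ m)
      (hi : cnt i (Φ.plug (.or k (.or i (rename ρ₁ C) A) (.or j (rename ρ₂ C) B))) = 1)
      (hj : cnt j (Φ.plug (.or k (.or i (rename ρ₁ C) A) (.or j (rename ρ₂ C) B))) = 1)
      (hm : cnt m (Φ.plug (.or m C (.or k A B))) = 1)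
      (hfix : ∀ x ∈ ids C, cnt x (Φ.plug (.or m C (.or k A B))) ≠ 1 → ρ₁ x = x ∧ ρ₂ x = x)
      (hfresh : ∀ x ∈ ids C, cnt x (Φ.plug (.or m C (.or k A B))) = 1 →
        cnt (ρ₁ x) (Φ.plug (.or k (.or i (rename ρ₁ C) A) (.or j (rename ρ₂ C) B))) = 1 ∧
        cnt (ρ₂ x) (Φ.plug (.or k (.or i (rename ρ₁ C) A) (.or j (rename ρ₂ C) B))) = 1 ∧
        ρ₁ x ≠ ρ₂ x)
      (hinj₁ : Set.InjOn ρ₁ (ids C)) (hinj₂ : Set.InjOn ρ₂ (ids C)) :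
      Step (Φ.plug (.or k (.or i (rename ρ₁ C) A) (.or j (rename ρ₂ C) B)))
           (Φ.plug (.or m C (.or k A B)))
  | ruleIII_and (Φ : Ctx) (A B C D : Cirq) (k : ℕ) :
      Step (Φ.plug (.or k (.and A C) (.and B D))) (Φ.plug (.and (.or k A B) (.or k C D)))
  | ruleIII_orN (Φ : Ctx) (A B C D : Cirq) (k l : ℕ)
      (hns : 2 ≤ cnt l (Φ.plug (.or l (.or k A B) (.or k C D)))) :
      Step (Φ.plug (.or k (.or l A C) (.or l B D))) (Φ.plug (.or l (.or k A B) (.or k C D)))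
  | ruleIII_orS (Φ : Ctx) (A B C D : Cirq) (k i j m : ℕ)
      (hij : i ≠ j) (hik : i ≠ k) (hjk : j ≠ k) (him : i ≠ m) (hjm : j ≠ m) (hkm : k ≠ m)
      (hi : cnt i (Φ.plug (.or k (.or i A C) (.or j B D))) = 1)
      (hj : cnt j (Φ.plug (.or k (.or i A C) (.or j B D))) = 1)
      (hm : cnt m (Φ.plug (.or m (.or k A B) (.or k C D))) = 1) :
      Step (Φ.plug (.or k (.or i A C) (.or j B D))) (Φ.plug (.or m (.or k A B) (.or k C D)))

/-- Provability in IF_p: start from a classical tautology, apply rules. -/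
inductive Proves : Cirq → Prop where
  | ax (C : Cirq) (hc : classicalCirq C) (ht : ∀ I : ℕ → Bool, ctrue I C) : Proves C
  | step (P C : Cirq) (hp : Proves P) (hs : Step P C) : Proves C

section Helpers

lemma metatrue_congr {I f g : ℕ → Bool} {X : Cirq} (h : ∀ x ∈ ids X, f x = g x) :
    metatrue I f X ↔ metatrue I g X := by
  induction X with
  | lit n s => rfl
  | and A B ihA ihB =>
    simp only [metatrue]
    rw [ihA (fun x hx => h x (by simp [ids, hx])), ihB (fun x hx => h x (by simp [ids, hx]))]
  | or k A B ihA ihB =>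
    simp only [metatrue]
    rw [h k (by simp [ids]), ihA (fun x hx => h x (by simp [ids, hx])),
      ihB (fun x hx => h x (by simp [ids, hx]))]

lemma metatrue_rename {I f : ℕ → Bool} {ρ : ℕ → ℕ} {X : Cirq} :
    metatrue I f (rename ρ X) ↔ metatrue I (f ∘ ρ) X := by
  induction X with
  | lit n s => rfl
  | and A B ihA ihB => simp only [rename, metatrue, ihA, ihB]
  | or k A B ihA ihB => simp only [rename, metatrue, ihA, ihB]; rfl

lemma mem_ids_iff {x : ℕ} {X : Cirq} : x ∈ ids X ↔ 1 ≤ cnt x X := by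
  induction X with
  | lit n s => simp [ids, cnt]
  | and A B ihA ihB => simp [ids, cnt, ihA, ihB]; omega
  | or k A B ihA ihB =>
    simp only [ids, Set.mem_insert_iff, Set.mem_union, cnt, ihA, ihB]
    by_cases hk : k = x
    · simp [hk]; omega
    · simp [hk, Ne.symm hk]; omega

lemma le_cnt_rename (ρ : ℕ → ℕ) (x : ℕ) (X : Cirq) :
    cnt x X ≤ cnt (ρ x) (rename ρ X) := by
  induction X with
  | lit n s => simp [rename, cnt]
  | and A B ihA ihB => simp only [rename, cnt]; omega
  | or k A B ihA ihB =>
    simp only [rename, cnt]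
    have : (if k = x then 1 else 0) ≤ (if ρ k = ρ x then 1 else 0) := by
      split
      · rename_i h; simp [h]
      · omega
    omega

def Ctx.cnt (x : ℕ) : Ctx → ℕ
  | .hole => 0
  | .andL Φ C => Ctx.cnt x Φ + _root_.cnt x C
  | .andR C Φ => _root_.cnt x C + Ctx.cnt x Φ
  | .orL k Φ C => (if k = x then 1 else 0) + Ctx.cnt x Φ + _root_.cnt x C
  | .orR k C Φ => (if k = x then 1 else 0) + _root_.cnt x C + Ctx.cnt x Φ

lemma cnt_plug (x : ℕ) (Φ : Ctx) (X : Cirq) :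
    cnt x (Φ.plug X) = Ctx.cnt x Φ + cnt x X := by
  induction Φ with
  | hole => simp [Ctx.plug, Ctx.cnt]
  | andL Φ C ih => simp [Ctx.plug, Ctx.cnt, cnt, ih]; omega
  | andR C Φ ih => simp [Ctx.plug, Ctx.cnt, cnt, ih]; omega
  | orL k Φ C ih => simp [Ctx.plug, Ctx.cnt, cnt, ih]; omega
  | orR k C Φ ih => simp [Ctx.plug, Ctx.cnt, cnt, ih]; omega

lemma plug_lift {I f g : ℕ → Bool} {Φ : Ctx} {X Y : Cirq}
    (hctx : ∀ x, 1 ≤ Ctx.cnt x Φ → f x = g x)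
    (h : metatrue I f X → metatrue I g Y) :
    metatrue I f (Φ.plug X) → metatrue I g (Φ.plug Y) := by
  induction Φ with
  | hole => exact h
  | andL Φ C ih =>
    have hC : metatrue I f C ↔ metatrue I g C :=
      metatrue_congr (fun x hx => hctx x (by simp [Ctx.cnt]; have := mem_ids_iff.1 hx; omega))
    have := ih (fun x hx => hctx x (by simp [Ctx.cnt]; omega))
    rintro ⟨h1, h2⟩
    exact ⟨this h1, hC.1 h2⟩
  | andR C Φ ih =>
    have hC : metatrue I f C ↔ metatrue I g C :=
      metatrue_congr (fun x hx => hctx x (by simp [Ctx.cnt]; have := mem_ids_iff.1 hx; omega))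
    have := ih (fun x hx => hctx x (by simp [Ctx.cnt]; omega))
    rintro ⟨h1, h2⟩
    exact ⟨hC.1 h1, this h2⟩
  | orL k Φ C ih =>
    have hC : metatrue I f C ↔ metatrue I g C :=
      metatrue_congr (fun x hx => hctx x (by simp [Ctx.cnt]; have := mem_ids_iff.1 hx; omega))
    have hk : f k = g k := hctx k (by simp [Ctx.cnt]; omega)
    have := ih (fun x hx => hctx x (by simp [Ctx.cnt]; by_cases h : k = x <;> simp [h] <;> omega))
    rintro (⟨h1, h2⟩ | ⟨h1, h2⟩)
    · exact Or.inl ⟨hk ▸ h1, this h2⟩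
    · exact Or.inr ⟨hk ▸ h1, hC.1 h2⟩
  | orR k C Φ ih =>
    have hC : metatrue I f C ↔ metatrue I g C :=
      metatrue_congr (fun x hx => hctx x (by simp [Ctx.cnt]; have := mem_ids_iff.1 hx; omega))
    have hk : f k = g k := hctx k (by simp [Ctx.cnt]; omega)
    have := ih (fun x hx => hctx x (by simp [Ctx.cnt]; by_cases h : k = x <;> simp [h] <;> omega))
    rintro (⟨h1, h2⟩ | ⟨h1, h2⟩)
    · exact Or.inl ⟨hk ▸ h1, hC.1 h2⟩
    · exact Or.inr ⟨hk ▸ h1, this h2⟩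

end Helpers
theorem stmt8 (Φ : Ctx) (A B C : Cirq) (ρ₁ ρ₂ : ℕ → ℕ) (k i j m : ℕ)
    (hij : i ≠ j) (hik : i ≠ k) (hjk : j ≠ k) (him : i ≠ m) (hjm : j ≠ m) (hkm : k ≠ m)
    (hi : cnt i (Φ.plug (.or k (.or i A (rename ρ₁ C)) (.or j B (rename ρ₂ C)))) = 1)
    (hj : cnt j (Φ.plug (.or k (.or i A (rename ρ₁ C)) (.or j B (rename ρ₂ C)))) = 1)
    (hm : cnt m (Φ.plug (.or m (.or k A B) C)) = 1)
    (hfix : ∀ x ∈ ids C, cnt x (Φ.plug (.or m (.or k A B) C)) ≠ 1 → ρ₁ x = x ∧ ρ₂ x = x)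
    (hfresh : ∀ x ∈ ids C, cnt x (Φ.plug (.or m (.or k A B) C)) = 1 →
      cnt (ρ₁ x) (Φ.plug (.or k (.or i A (rename ρ₁ C)) (.or j B (rename ρ₂ C)))) = 1 ∧
      cnt (ρ₂ x) (Φ.plug (.or k (.or i A (rename ρ₁ C)) (.or j B (rename ρ₂ C)))) = 1 ∧
      ρ₁ x ≠ ρ₂ x)
    (hinj₁ : Set.InjOn ρ₁ (ids C)) (hinj₂ : Set.InjOn ρ₂ (ids C))
    (I : ℕ → Bool) :
    cirqTrue I (Φ.plug (.or k (.or i A (rename ρ₁ C)) (.or j B (rename ρ₂ C)))) ↔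
    cirqTrue I (Φ.plug (.or m (.or k A B) C)) := by 

  classical
  have cP : ∀ x, cnt x (Φ.plug (.or k (.or i A (rename ρ₁ C)) (.or j B (rename ρ₂ C)))) =
      Ctx.cnt x Φ + (if k = x then 1 else 0) + (if i = x then 1 else 0) + (if j = x then 1 else 0)
      + cnt x A + cnt x B + cnt x (rename ρ₁ C) + cnt x (rename ρ₂ C) := by
    intro x; rw [cnt_plug]; simp only [cnt]; split_ifs <;> omega
  have cQ : ∀ x, cnt x (Φ.plug (.or m (.or k A B) C)) =
      Ctx.cnt x Φ + (if m = x then 1 else 0) + (if k = x then 1 else 0)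
      + cnt x A + cnt x B + cnt x C := by
    intro x; rw [cnt_plug]; simp only [cnt]; split_ifs <;> omega
  have cQ0 : ∀ x, Ctx.cnt x Φ + cnt x A + cnt x B + cnt x C ≤ cnt x (Φ.plug (.or m (.or k A B) C)) := by
    intro x; rw [cQ]; split_ifs <;> omega
  have cQk : 1 + cnt k C ≤ cnt k (Φ.plug (.or m (.or k A B) C)) := by
    rw [cQ]; split_ifs <;> omega
  have cP0 : ∀ x, Ctx.cnt x Φ + cnt x A + cnt x B + cnt x (rename ρ₁ C) + cnt x (rename ρ₂ C)
      ≤ cnt x (Φ.plug (.or k (.or i A (rename ρ₁ C)) (.or j B (rename ρ₂ C)))) := by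
    intro x; rw [cP]; split_ifs <;> omega
  have cPk : 1 + cnt k (rename ρ₁ C) + cnt k (rename ρ₂ C) ≤ cnt k (Φ.plug (.or k (.or i A (rename ρ₁ C)) (.or j B (rename ρ₂ C)))) := by
    rw [cP]; split_ifs <;> omega
  rw [cP i, if_neg (Ne.symm hik), if_pos rfl, if_neg (Ne.symm hij)] at hi
  rw [cP j, if_neg (Ne.symm hjk), if_neg hij, if_pos rfl] at hj
  rw [cQ m, if_pos rfl, if_neg hkm] at hm
  have hfr : ∀ x, 1 ≤ cnt x C → cnt x (Φ.plug (.or m (.or k A B) C)) = 1 →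
      cnt (ρ₁ x) (Φ.plug (.or k (.or i A (rename ρ₁ C)) (.or j B (rename ρ₂ C)))) = 1 ∧ cnt (ρ₂ x) (Φ.plug (.or k (.or i A (rename ρ₁ C)) (.or j B (rename ρ₂ C)))) = 1 ∧ ρ₁ x ≠ ρ₂ x :=
    fun x hx hq => hfresh x (mem_ids_iff.2 hx) hq
  have hfx : ∀ x, 1 ≤ cnt x C → cnt x (Φ.plug (.or m (.or k A B) C)) ≠ 1 → ρ₁ x = x ∧ ρ₂ x = x :=
    fun x hx hq => hfix x (mem_ids_iff.2 hx) hq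
  have hne₁ : ∀ x, 1 ≤ cnt x C → cnt x (Φ.plug (.or m (.or k A B) C)) = 1 → ρ₁ x ≠ i ∧ ρ₁ x ≠ j ∧ ρ₁ x ≠ k := by
    intro x hx hq
    have h1 : 1 ≤ cnt (ρ₁ x) (rename ρ₁ C) := le_trans hx (le_cnt_rename ρ₁ x C)
    have h2 := (hfr x hx hq).1
    refine ⟨fun e => ?_, fun e => ?_, fun e => ?_⟩
    · rw [e] at h1; omega
    · rw [e] at h1; omega
    · rw [e] at h1 h2; omega
  have hne₂ : ∀ x, 1 ≤ cnt x C → cnt x (Φ.plug (.or m (.or k A B) C)) = 1 → ρ₂ x ≠ i ∧ ρ₂ x ≠ j ∧ ρ₂ x ≠ k := by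
    intro x hx hq
    have h1 : 1 ≤ cnt (ρ₂ x) (rename ρ₂ C) := le_trans hx (le_cnt_rename ρ₂ x C)
    have h2 := (hfr x hx hq).2.1
    refine ⟨fun e => ?_, fun e => ?_, fun e => ?_⟩
    · rw [e] at h1; omega
    · rw [e] at h1; omega
    · rw [e] at h1 h2; omega
  have hsep : ∀ x y, 1 ≤ cnt x C → cnt x (Φ.plug (.or m (.or k A B) C)) = 1 → 1 ≤ cnt y C → cnt y (Φ.plug (.or m (.or k A B) C)) = 1 →
      ρ₁ x ≠ ρ₂ y := by
    intro x y hx hqx hy hqy e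
    have h1 : 1 ≤ cnt (ρ₁ x) (rename ρ₁ C) := le_trans hx (le_cnt_rename ρ₁ x C)
    have h2 : 1 ≤ cnt (ρ₂ y) (rename ρ₂ C) := le_trans hy (le_cnt_rename ρ₂ y C)
    have h3 := (hfr x hx hqx).1
    rw [e] at h1 h3
    have h4 := cP0 (ρ₂ y)
    omega
  have hnf : ∀ x, 1 ≤ cnt x C → cnt x (Φ.plug (.or m (.or k A B) C)) ≠ 1 →
      x ≠ i ∧ x ≠ j ∧ ∀ y, 1 ≤ cnt y C → cnt y (Φ.plug (.or m (.or k A B) C)) = 1 → ρ₁ y ≠ x ∧ ρ₂ y ≠ x := by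
    intro x hx hq
    obtain ⟨e1, e2⟩ := hfx x hx hq
    have h1 : 1 ≤ cnt x (rename ρ₁ C) := by
      have := le_cnt_rename ρ₁ x C; rw [e1] at this; omega
    have h2 : 1 ≤ cnt x (rename ρ₂ C) := by
      have := le_cnt_rename ρ₂ x C; rw [e2] at this; omega
    refine ⟨fun e => ?_, fun e => ?_, fun y hy hqy => ⟨fun e => ?_, fun e => ?_⟩⟩
    · rw [e] at h1; omega
    · rw [e] at h2; omega
    · have h3 := (hfr y hy hqy).1; rw [e] at h3; have := cP0 x; omega
    · have h3 := (hfr y hy hqy).2.1; rw [e] at h3; have := cP0 x; omega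
  constructor
  · rintro ⟨f, hf⟩
    set g : ℕ → Bool := fun x =>
      if x = m then (if f k = true then f i else f j)
      else if 1 ≤ cnt x C ∧ cnt x (Φ.plug (.or m (.or k A B) C)) = 1 then
        (if f k = true then f (ρ₁ x) else f (ρ₂ x))
      else f x with hgdef
    have gm : g m = (if f k = true then f i else f j) := by
      simp [hgdef]
    have gfr : ∀ x, x ≠ m → 1 ≤ cnt x C → cnt x (Φ.plug (.or m (.or k A B) C)) = 1 →
        g x = (if f k = true then f (ρ₁ x) else f (ρ₂ x)) := by
      intro x h1 h2 h3; simp only [hgdef]; rw [if_neg h1, if_pos ⟨h2, h3⟩]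
    have gf : ∀ x, x ≠ m → ¬(1 ≤ cnt x C ∧ cnt x (Φ.plug (.or m (.or k A B) C)) = 1) → g x = f x := by
      intro x h1 h2; simp only [hgdef]; rw [if_neg h1, if_neg h2]
    have gA : ∀ x, 1 ≤ cnt x A → g x = f x := by
      intro x hx
      refine gf x ?_ ?_
      · rintro rfl; omega
      · rintro ⟨h1, h2⟩; have := cQ0 x; omega
    have gB : ∀ x, 1 ≤ cnt x B → g x = f x := by
      intro x hx
      refine gf x ?_ ?_
      · rintro rfl; omega
      · rintro ⟨h1, h2⟩; have := cQ0 x; omega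
    have gk : g k = f k := by
      refine gf k hkm ?_
      rintro ⟨h1, h2⟩; omega
    refine ⟨g, plug_lift ?_ ?_ hf⟩
    · intro x hx
      refine (gf x ?_ ?_).symm
      · rintro rfl; omega
      · rintro ⟨h1, h2⟩; have := cQ0 x; omega
    · intro h
      simp only [metatrue] at h ⊢
      rcases h with ⟨hk1, h⟩ | ⟨hk0, h⟩
      · rcases h with ⟨hi1, hA⟩ | ⟨hi0, hC1⟩
        · refine Or.inl ⟨?_, Or.inl ⟨?_, ?_⟩⟩
          · rw [gm, if_pos hk1, hi1]
          · rw [gk, hk1]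
          · exact (metatrue_congr fun x hx => (gA x (mem_ids_iff.1 hx)).symm).1 hA
        · refine Or.inr ⟨?_, ?_⟩
          · rw [gm, if_pos hk1, hi0]
          · refine (metatrue_congr ?_).1 (metatrue_rename.1 hC1)
            intro x hx
            have hx1 := mem_ids_iff.1 hx
            have hxm : x ≠ m := by rintro rfl; omega
            show f (ρ₁ x) = g x
            by_cases hq : cnt x (Φ.plug (.or m (.or k A B) C)) = 1
            · rw [gfr x hxm hx1 hq, if_pos hk1]
            · rw [gf x hxm (by tauto), (hfx x hx1 hq).1]
      · have hk0' : ¬ (f k = true) := by simp [hk0]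
        rcases h with ⟨hj1, hB⟩ | ⟨hj0, hC2⟩
        · refine Or.inl ⟨?_, Or.inr ⟨?_, ?_⟩⟩
          · rw [gm, if_neg hk0', hj1]
          · rw [gk, hk0]
          · exact (metatrue_congr fun x hx => (gB x (mem_ids_iff.1 hx)).symm).1 hB
        · refine Or.inr ⟨?_, ?_⟩
          · rw [gm, if_neg hk0', hj0]
          · refine (metatrue_congr ?_).1 (metatrue_rename.1 hC2)
            intro x hx
            have hx1 := mem_ids_iff.1 hx
            have hxm : x ≠ m := by rintro rfl; omega
            show f (ρ₂ x) = g x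
            by_cases hq : cnt x (Φ.plug (.or m (.or k A B) C)) = 1
            · rw [gfr x hxm hx1 hq, if_neg hk0']
            · rw [gf x hxm (by tauto), (hfx x hx1 hq).2]
  · rintro ⟨g, hg⟩
    set f : ℕ → Bool := fun x =>
      if x = i ∨ x = j then g m
      else if h : ∃ y, (1 ≤ cnt y C ∧ cnt y (Φ.plug (.or m (.or k A B) C)) = 1) ∧ ρ₁ y = x then g h.choose
      else if h : ∃ y, (1 ≤ cnt y C ∧ cnt y (Φ.plug (.or m (.or k A B) C)) = 1) ∧ ρ₂ y = x then g h.choose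
      else g x with hfdef
    have fi : f i = g m := by simp [hfdef]
    have fj : f j = g m := by simp [hfdef]
    have fg : ∀ x, x ≠ i → x ≠ j →
        (∀ y, 1 ≤ cnt y C → cnt y (Φ.plug (.or m (.or k A B) C)) = 1 → ρ₁ y ≠ x ∧ ρ₂ y ≠ x) → f x = g x := by
      intro x h1 h2 h3
      simp only [hfdef]
      rw [if_neg (by rintro (rfl | rfl); exacts [h1 rfl, h2 rfl]),
        dif_neg (by rintro ⟨y, ⟨hy1, hy2⟩, hy3⟩; exact (h3 y hy1 hy2).1 hy3),
        dif_neg (by rintro ⟨y, ⟨hy1, hy2⟩, hy3⟩; exact (h3 y hy1 hy2).2 hy3)]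
    have fr₁ : ∀ x, 1 ≤ cnt x C → cnt x (Φ.plug (.or m (.or k A B) C)) = 1 → f (ρ₁ x) = g x := by
      intro x hx hq
      obtain ⟨n1, n2, n3⟩ := hne₁ x hx hq
      have hex : ∃ y, (1 ≤ cnt y C ∧ cnt y (Φ.plug (.or m (.or k A B) C)) = 1) ∧ ρ₁ y = ρ₁ x := ⟨x, ⟨hx, hq⟩, rfl⟩
      simp only [hfdef]
      rw [if_neg (by rintro (e | e); exacts [n1 e, n2 e]), dif_pos hex]
      have hs := hex.choose_spec
      have he : hex.choose = x := hinj₁ (mem_ids_iff.2 hs.1.1) (mem_ids_iff.2 hx) hs.2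
      rw [he]
    have fr₂ : ∀ x, 1 ≤ cnt x C → cnt x (Φ.plug (.or m (.or k A B) C)) = 1 → f (ρ₂ x) = g x := by
      intro x hx hq
      obtain ⟨n1, n2, n3⟩ := hne₂ x hx hq
      have hnex : ¬ ∃ y, (1 ≤ cnt y C ∧ cnt y (Φ.plug (.or m (.or k A B) C)) = 1) ∧ ρ₁ y = ρ₂ x := by
        rintro ⟨y, ⟨hy1, hy2⟩, e⟩; exact hsep y x hy1 hy2 hx hq e
      have hex : ∃ y, (1 ≤ cnt y C ∧ cnt y (Φ.plug (.or m (.or k A B) C)) = 1) ∧ ρ₂ y = ρ₂ x := ⟨x, ⟨hx, hq⟩, rfl⟩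
      simp only [hfdef]
      rw [if_neg (by rintro (e | e); exacts [n1 e, n2 e]), dif_neg hnex, dif_pos hex]
      have hs := hex.choose_spec
      have he : hex.choose = x := hinj₂ (mem_ids_iff.2 hs.1.1) (mem_ids_iff.2 hx) hs.2
      rw [he]
    have fk : f k = g k := by
      refine fg k (Ne.symm hik) (Ne.symm hjk) ?_
      intro y hy hq
      exact ⟨(hne₁ y hy hq).2.2, (hne₂ y hy hq).2.2⟩
    have fA : ∀ x, 1 ≤ cnt x A → f x = g x := by
      intro x hx
      refine fg x ?_ ?_ fun y hy hq => ⟨fun e => ?_, fun e => ?_⟩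
      · rintro rfl; omega
      · rintro rfl; omega
      · have h3 := (hfr y hy hq).1; rw [e] at h3
        have h4 := le_trans hy (le_cnt_rename ρ₁ y C); rw [e] at h4
        have := cP0 x; omega
      · have h3 := (hfr y hy hq).2.1; rw [e] at h3
        have h4 := le_trans hy (le_cnt_rename ρ₂ y C); rw [e] at h4
        have := cP0 x; omega
    have fB : ∀ x, 1 ≤ cnt x B → f x = g x := by
      intro x hx
      refine fg x ?_ ?_ fun y hy hq => ⟨fun e => ?_, fun e => ?_⟩
      · rintro rfl; omega
      · rintro rfl; omega
      · have h3 := (hfr y hy hq).1; rw [e] at h3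
        have h4 := le_trans hy (le_cnt_rename ρ₁ y C); rw [e] at h4
        have := cP0 x; omega
      · have h3 := (hfr y hy hq).2.1; rw [e] at h3
        have h4 := le_trans hy (le_cnt_rename ρ₂ y C); rw [e] at h4
        have := cP0 x; omega
    refine ⟨f, plug_lift ?_ ?_ hg⟩
    · intro x hx
      refine (fg x ?_ ?_ fun y hy hq => ⟨fun e => ?_, fun e => ?_⟩).symm
      · rintro rfl; omega
      · rintro rfl; omega
      · have h3 := (hfr y hy hq).1; rw [e] at h3
        have h4 := le_trans hy (le_cnt_rename ρ₁ y C); rw [e] at h4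
        have := cP0 x; omega
      · have h3 := (hfr y hy hq).2.1; rw [e] at h3
        have h4 := le_trans hy (le_cnt_rename ρ₂ y C); rw [e] at h4
        have := cP0 x; omega
    · intro h
      simp only [metatrue] at h ⊢
      rcases h with ⟨hm1, h⟩ | ⟨hm0, hC0⟩
      · rcases h with ⟨hk1, hA⟩ | ⟨hk0, hB⟩
        · refine Or.inl ⟨by rw [fk, hk1], Or.inl ⟨by rw [fi, hm1], ?_⟩⟩
          exact (metatrue_congr fun x hx => fA x (mem_ids_iff.1 hx)).2 hA
        · refine Or.inr ⟨by rw [fk, hk0], Or.inl ⟨by rw [fj, hm1], ?_⟩⟩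
          exact (metatrue_congr fun x hx => fB x (mem_ids_iff.1 hx)).2 hB
      · by_cases hfk : f k = true
        · refine Or.inl ⟨hfk, Or.inr ⟨by rw [fi, hm0], ?_⟩⟩
          refine metatrue_rename.2 ((metatrue_congr ?_).2 hC0)
          intro x hx
          have hx1 := mem_ids_iff.1 hx
          show f (ρ₁ x) = g x
          by_cases hq : cnt x (Φ.plug (.or m (.or k A B) C)) = 1
          · exact fr₁ x hx1 hq
          · rw [(hfx x hx1 hq).1]
            exact fg x (hnf x hx1 hq).1 (hnf x hx1 hq).2.1 (hnf x hx1 hq).2.2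
        · have hfk0 : f k = false := by revert hfk; cases f k <;> simp
          refine Or.inr ⟨hfk0, Or.inr ⟨by rw [fj, hm0], ?_⟩⟩
          refine metatrue_rename.2 ((metatrue_congr ?_).2 hC0)
          intro x hx
          have hx1 := mem_ids_iff.1 hx
          show f (ρ₂ x) = g x
          by_cases hq : cnt x (Φ.plug (.or m (.or k A B) C)) = 1
          · exact fr₂ x hx1 hq
          · rw [(hfx x hx1 hq).2]
            exact fg x (hnf x hx1 hq).1 (hnf x hx1 hq).2.1 (hnf x hx1 hq).2.2
end

section
/- Rule I preserves validity: if Φ{Ψ{A} ∨_k C} is valid, then Φ{Ψ{A ∨_k B} ∨_k C} is valid, and conversely. -/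
lemma plug_congr (I f : ℕ → Bool) (Φ : Ctx) {X Y : Cirq}
    (h : metatrue I f X ↔ metatrue I f Y) :
    metatrue I f (Φ.plug X) ↔ metatrue I f (Φ.plug Y) := by
  induction Φ with
  | hole => exact h
  | andL Φ C ih => simp [Ctx.plug, metatrue, ih]
  | andR C Φ ih => simp [Ctx.plug, metatrue, ih]
  | orL k Φ C ih => simp [Ctx.plug, metatrue, ih]
  | orR k C Φ ih => simp [Ctx.plug, metatrue, ih]

theorem stmt19 (Φ Ψ : Ctx) (A B C : Cirq) (k : ℕ) :
    valid (Φ.plug (.or k (Ψ.plug A) C)) ↔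
    valid (Φ.plug (.or k (Ψ.plug (.or k A B)) C)) := by
  have key : ∀ I f : ℕ → Bool,
      metatrue I f (Φ.plug (.or k (Ψ.plug A) C)) ↔
      metatrue I f (Φ.plug (.or k (Ψ.plug (.or k A B)) C)) := by
    intro I f
    apply plug_congr
    cases hf : f k with
    | true =>
      have h2 : metatrue I f (Ψ.plug A) ↔ metatrue I f (Ψ.plug (.or k A B)) := by
        apply plug_congr
        simp [metatrue, hf]
      simp [metatrue, hf, h2]
    | false => simp [metatrue, hf]
  constructor
  · intro hv I
    obtain ⟨f, hf⟩ := hv I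
    exact ⟨f, (key I f).mp hf⟩
  · intro hv I
    obtain ⟨f, hf⟩ := hv I
    exact ⟨f, (key I f).mpr hf⟩
end
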